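/- Let q ≥ 3 and n ≥ 2. If there exists a nonempty spherical bitrade in the Hamming graph H(n,q), then q divides n. If there exists a nonempty perfect bitrade in H(n,q), then n ≡ 1 (mod q). -/

import Mathlib

open scoped BigOperators

/-- The ball of radius 1 centered at `x` in a graph `G`. -/
def ball1 {V : Type*} (G : SimpleGraph V) (x : V) : Set V := {y | y = x ∨ G.Adj x y}

/-- A perfect one-error-correcting code: the balls of radius 1 centered at the
vertices of `C` partition the vertex set. -/
def IsPerfectCode {V : Type*} (G : SimpleGraph V) (C : Set V) : Prop :=
  ∀ x : V, ∃! c, c ∈ C ∧ c ∈ ball1 G x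

/-- A perfect bitrade: a pair of disjoint nonempty vertex sets such that every ball of
radius 1 contains exactly one vertex of each, or none of either. -/
def IsPerfectBitrade {V : Type*} (G : SimpleGraph V) (T0 T1 : Set V) : Prop :=
  Disjoint T0 T1 ∧ T0.Nonempty ∧ T1.Nonempty ∧
    ∀ x : V,
      ((∃! y, y ∈ T0 ∧ y ∈ ball1 G x) ∧ (∃! y, y ∈ T1 ∧ y ∈ ball1 G x)) ∨
        (∀ y, y ∈ T0 ∪ T1 → y ∉ ball1 G x)

/-- A spherical bitrade: a pair of disjoint nonempty vertex sets such that every sphere of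
radius 1 contains exactly one vertex of each, or none of either. -/
def IsSphericalBitrade {V : Type*} (G : SimpleGraph V) (S0 S1 : Set V) : Prop :=
  Disjoint S0 S1 ∧ S0.Nonempty ∧ S1.Nonempty ∧
    ∀ x : V,
      ((∃! y, y ∈ S0 ∧ G.Adj x y) ∧ (∃! y, y ∈ S1 ∧ G.Adj x y)) ∨
        (∀ y, y ∈ S0 ∪ S1 → ¬ G.Adj x y)

/-- The Hamming graph `H(n,q)`: vertices are `n`-tuples over an alphabet of size `q`,
adjacent iff they differ in exactly one coordinate. -/
def hammingGraph (n q : ℕ) : SimpleGraph (Fin n → Fin q) where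
  Adj x y := hammingDist x y = 1
  symm := ⟨fun x y (h : hammingDist x y = 1) => by show hammingDist y x = 1; rwa [hammingDist_comm]⟩
  loopless := ⟨fun x (h : hammingDist x x = 1) => by simp [hammingDist_self] at h⟩

/-- `f` is a `μ`-eigenfunction of `G`: `f` is not identically zero and
`μ · f x = ∑_{y ∈ O(x)} f y` for every vertex `x`. -/
def IsEigenfun {V : Type*} (G : SimpleGraph V) (μ : ℝ) (f : V → ℝ) : Prop :=
  f ≠ 0 ∧ ∀ x : V, μ * f x = ∑ᶠ y ∈ G.neighborSet x, f y

/-- The characteristic function of a set of vertices. -/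
noncomputable def chi {V : Type*} (C : Set V) : V → ℝ := Set.indicator C 1

/-- The code `C` has minimum (graph) distance exactly `d`. -/
def HasMinDist {V : Type*} (G : SimpleGraph V) (C : Set V) (d : ℕ) : Prop :=
  (∀ x ∈ C, ∀ y ∈ C, x ≠ y → (d : ℕ∞) ≤ G.edist x y) ∧
    ∃ x ∈ C, ∃ y ∈ C, x ≠ y ∧ G.edist x y = d

/-- The code `C` of `n`-tuples has minimum Hamming distance exactly `d`. -/
def HasMinHDist {n q : ℕ} (C : Set (Fin n → Fin q)) (d : ℕ) : Prop :=
  (∀ x ∈ C, ∀ y ∈ C, x ≠ y → d ≤ hammingDist x y) ∧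
    ∃ x ∈ C, ∃ y ∈ C, x ≠ y ∧ hammingDist x y = d

/-- `G` is distance-regular with intersection numbers `p i j k`. -/
def IsDistRegular {V : Type*} (G : SimpleGraph V) (p : ℕ → ℕ → ℕ → ℕ) : Prop :=
  G.Connected ∧ ∀ (i j k : ℕ) (x y : V), G.edist x y = k →
    {z : V | G.edist x z = i ∧ G.edist z y = j}.ncard = p i j k

/-! The difference `chi S0 - chi S1` of the characteristic functions of a spherical (resp.
perfect) bitrade is an eigenfunction of the graph with eigenvalue `0` (resp. `-1`). Identify the
alphabet `Fin q` with the group `ℤ/q`. Pairing an eigenfunction `f` of `H(n,q)` with a character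
`ψ` of `(ℤ/q)ⁿ` that does not annihilate it shows that its eigenvalue is `q z - n`, where `z` is
the number of coordinates on which `ψ` is trivial. Hence `n = q z`, resp. `n = q z + 1`. -/

open Finset Function

section Bitrade
variable {V : Type*} {S0 S1 s : Set V}

lemma support_chi_sub_chi_subset : support (chi S0 - chi S1) ⊆ S0 ∪ S1 := by
  intro y hy
  by_contra hn
  simp only [Set.mem_union, not_or] at hn
  simp [chi, hn.1, hn.2] at hy

lemma chi_sub_chi_ne_zero (hd : Disjoint S0 S1) (hS0 : S0.Nonempty) : chi S0 - chi S1 ≠ 0 := by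
  obtain ⟨a, ha⟩ := hS0
  intro h
  simpa [chi, ha, hd.notMem_of_mem_left ha] using congrFun h a

lemma finite_inter_union_of_unique_or_disjoint
    (h : ((∃! y, y ∈ S0 ∧ y ∈ s) ∧ (∃! y, y ∈ S1 ∧ y ∈ s)) ∨
      ∀ y, y ∈ S0 ∪ S1 → y ∉ s) :
    (s ∩ (S0 ∪ S1)).Finite := by
  rcases h with ⟨⟨a, -, ha⟩, ⟨b, -, hb⟩⟩ | hnone
  · refine (Set.toFinite {a, b}).subset ?_
    rintro y ⟨hy, hy0 | hy1⟩
    exacts [Or.inl (ha y ⟨hy0, hy⟩), Or.inr (hb y ⟨hy1, hy⟩)]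
  · convert Set.finite_empty
    exact Set.eq_empty_of_forall_notMem fun y hy => hnone y hy.2 hy.1

lemma finsum_mem_chi_sub_chi_of_unique_or_disjoint (hd : Disjoint S0 S1)
    (h : ((∃! y, y ∈ S0 ∧ y ∈ s) ∧ (∃! y, y ∈ S1 ∧ y ∈ s)) ∨
      ∀ y, y ∈ S0 ∪ S1 → y ∉ s) :
    ∑ᶠ y ∈ s, (chi S0 - chi S1) y = 0 := by
  rcases h with ⟨⟨a, ⟨ha0, has⟩, ha⟩, ⟨b, ⟨hb1, hbs⟩, hb⟩⟩ | hnone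
  · have hab : a ≠ b := fun hab => hd.notMem_of_mem_left ha0 (hab ▸ hb1)
    have hs : ∀ y ∈ support (chi S0 - chi S1), y ∈ s ↔ y ∈ ({a, b} : Set V) := by
      intro y hy
      rcases support_chi_sub_chi_subset hy with hy0 | hy1
      · exact ⟨fun hys => Or.inl (ha y ⟨hy0, hys⟩), by rintro (rfl | rfl) <;> assumption⟩
      · exact ⟨fun hys => Or.inr (hb y ⟨hy1, hys⟩), by rintro (rfl | rfl) <;> assumption⟩
    rw [finsum_mem_inter_support_eq' _ _ _ hs, finsum_mem_pair hab]
    simp [chi, ha0, hb1, hd.notMem_of_mem_left ha0, hd.notMem_of_mem_right hb1]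
  · refine finsum_mem_of_eqOn_zero fun y hy => ?_
    have hy0 : y ∉ S0 := fun h => hnone y (Or.inl h) hy
    have hy1 : y ∉ S1 := fun h => hnone y (Or.inr h) hy
    simp [chi, hy0, hy1]

variable {G : SimpleGraph V}

theorem IsSphericalBitrade.isEigenfun (h : IsSphericalBitrade G S0 S1) :
    IsEigenfun G 0 (chi S0 - chi S1) := by
  obtain ⟨hd, hS0, -, hcond⟩ := h
  refine ⟨chi_sub_chi_ne_zero hd hS0, fun x => ?_⟩
  rw [zero_mul]
  exact (finsum_mem_chi_sub_chi_of_unique_or_disjoint hd (hcond x)).symm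

theorem IsPerfectBitrade.isEigenfun (h : IsPerfectBitrade G S0 S1) :
    IsEigenfun G (-1) (chi S0 - chi S1) := by
  obtain ⟨hd, hS0, -, hcond⟩ := h
  refine ⟨chi_sub_chi_ne_zero hd hS0, fun x => ?_⟩
  have hfin : (G.neighborSet x ∩ support (chi S0 - chi S1)).Finite :=
    (finite_inter_union_of_unique_or_disjoint (hcond x)).subset <|
      Set.inter_subset_inter (fun _ => Or.inr) support_chi_sub_chi_subset
  have hball : ball1 G x = insert x (G.neighborSet x) := rfl
  have hzero := finsum_mem_chi_sub_chi_of_unique_or_disjoint hd (hcond x)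
  rw [hball, finsum_mem_insert' _ G.notMem_neighborSet_self hfin] at hzero
  linarith

end Bitrade

section Hamming
variable {ι A : Type*} [DecidableEq ι] [AddCommGroup A] [DecidableEq A]

lemma hammingNorm_eq_one_iff [Fintype ι] {d : ι → A} :
    hammingNorm d = 1 ↔ ∃ j, ∃ c ≠ 0, Pi.single j c = d := by
  constructor
  · intro h
    obtain ⟨j, hj⟩ := card_eq_one.mp h
    have hsupp : ∀ i, d i ≠ 0 ↔ i = j := fun i => by
      simpa using congrArg (i ∈ ·) hj
    refine ⟨j, d j, (hsupp j).mpr rfl, funext fun i => ?_⟩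
    by_cases hij : i = j
    · subst hij; simp
    · simpa [hij, eq_comm] using (not_congr (hsupp i)).mpr hij
  · rintro ⟨j, c, hc, rfl⟩
    simp [hammingNorm, Pi.single_apply, hc, filter_eq']

omit [DecidableEq A] in
lemma injOn_single_of_ne_zero :
    Set.InjOn (fun p : ι × A => (Pi.single p.1 p.2 : ι → A)) {p | p.2 ≠ 0} := by
  rintro ⟨j, c⟩ hc ⟨j', c'⟩ - h
  have hj : j = j' := by
    by_contra hne
    exact hc (by simpa [Ne.symm hne] using congrFun h j)
  subst hj
  simpa using Pi.single_injective j h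

variable [Fintype ι] [Fintype A]

lemma sum_hammingNorm_eq_one {M : Type*} [AddCommMonoid M] (g : (ι → A) → M) :
    ∑ d with hammingNorm d = 1, g d = ∑ j, ∑ c ∈ univ.erase 0, g (Pi.single j c) := by
  rw [← sum_product',
    ← sum_image (f := g) (injOn_single_of_ne_zero.mono fun p hp => by simpa using hp)]
  congr 1
  ext d
  simp [hammingNorm_eq_one_iff, and_comm]

namespace AddChar

lemma exists_sum_mul_ne_zero {G : Type*} [AddCommGroup G] [Fintype G] {f : G → ℂ}
    (hf : f ≠ 0) :
    ∃ ψ : AddChar G ℂ, ∑ x, ψ x * f x ≠ 0 := by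
  classical
  by_contra! h
  refine hf (funext fun a => ?_)
  -- Fourier inversion: weighting by `ψ (-a)` and summing over all `ψ` recovers `f a`.
  have key : ∑ ψ : AddChar G ℂ, ψ (-a) * ∑ x, ψ x * f x = Fintype.card G * f a := by
    simp_rw [mul_sum, ← mul_assoc, ← map_add_eq_mul]
    rw [sum_comm]
    simp_rw [← sum_mul, neg_add_eq_sub, sum_apply_eq_ite, sub_eq_zero, ite_mul, zero_mul]
    simp
  simpa [h, Fintype.card_ne_zero] using key.symm

lemma sum_mul_comp_sub {G : Type*} [AddCommGroup G] [Fintype G] (ψ : AddChar G ℂ) (f : G → ℂ)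
    (d : G) : ∑ x, ψ x * f (x - d) = ψ d * ∑ x, ψ x * f x := by
  rw [mul_sum, ← Equiv.sum_comp (Equiv.addRight d)]
  simp [map_add_eq_mul, mul_comm, mul_left_comm]

lemma sum_hammingNorm_eq_one (ψ : AddChar (ι → A) ℂ) :
    ∑ d with hammingNorm d = 1, ψ d =
      Fintype.card A * #{j | ψ.compAddMonoidHom (AddMonoidHom.single _ j) = 0} -
        Fintype.card ι := by
  have hj : ∀ j, ∑ c ∈ univ.erase 0, ψ (Pi.single j c) =
      (if ψ.compAddMonoidHom (AddMonoidHom.single _ j) = 0 then (Fintype.card A : ℂ) else 0) -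
        1 := by
    intro j
    rw [← sum_eq_ite, sum_erase_eq_sub (mem_univ 0)]
    simp
  rw [_root_.sum_hammingNorm_eq_one, sum_congr rfl fun j _ => hj j, sum_sub_distrib, sum_ite,
    sum_const, sum_const_zero]
  simp [mul_comm]

end AddChar

theorem exists_eq_card_mul_sub_card_of_hamming_eigen {f : (ι → A) → ℂ} {μ : ℂ} (hf : f ≠ 0)
    (h : ∀ x, ∑ y with hammingDist x y = 1, f y = μ * f x) :
    ∃ z : ℕ, μ = Fintype.card A * z - Fintype.card ι := by
  obtain ⟨ψ, hψ⟩ := AddChar.exists_sum_mul_ne_zero hf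
  refine ⟨#{j | ψ.compAddMonoidHom (AddMonoidHom.single _ j) = 0}, mul_right_cancel₀ hψ ?_⟩
  have hnbr : ∀ x,
      ∑ y with hammingDist x y = 1, f y = ∑ d with hammingNorm d = 1, f (x - d) := by
    intro x
    rw [sum_filter, sum_filter, ← Equiv.sum_comp (Equiv.subLeft x)]
    simp [hammingDist_comm x, hammingDist_eq_hammingNorm]
  calc μ * ∑ x, ψ x * f x = ∑ x, ψ x * ∑ y with hammingDist x y = 1, f y := by
        simp_rw [h, mul_sum, mul_left_comm]
    _ = ∑ d with hammingNorm d = 1, ∑ x, ψ x * f (x - d) := by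
        simp_rw [hnbr, mul_sum]
        exact sum_comm
    _ = (∑ d with hammingNorm d = 1, ψ d) * ∑ x, ψ x * f x := by
        simp_rw [sum_mul, AddChar.sum_mul_comp_sub]
    _ = _ := by rw [AddChar.sum_hammingNorm_eq_one]

end Hamming

theorem IsEigenfun.exists_eq_of_hammingGraph {n q : ℕ} [NeZero q] {μ : ℝ}
    {f : (Fin n → Fin q) → ℝ} (h : IsEigenfun (hammingGraph n q) μ f) :
    ∃ z : ℕ, μ = q * z - n := by
  obtain ⟨hf, hμ⟩ := h
  have hnbr : ∀ x, (hammingGraph n q).neighborSet x = ↑({y | hammingDist x y = 1} : Finset _) :=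
    fun x => by ext; simp [hammingGraph]
  obtain ⟨z, hz⟩ := exists_eq_card_mul_sub_card_of_hamming_eigen (f := fun x => (f x : ℂ))
    (μ := μ) (fun h0 => hf (funext fun x => by simpa using congrFun h0 x)) fun x => by
      have := hμ x
      rw [hnbr, finsum_mem_coe_finset] at this
      exact_mod_cast this.symm
  simp only [Fintype.card_fin] at hz
  exact ⟨z, by exact_mod_cast hz⟩

theorem statement7_general (q n : ℕ) (hq : 3 ≤ q) :
    ((∃ S0 S1 : Set (Fin n → Fin q), IsSphericalBitrade (hammingGraph n q) S0 S1) →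
      q ∣ n) ∧
    ((∃ T0 T1 : Set (Fin n → Fin q), IsPerfectBitrade (hammingGraph n q) T0 T1) →
      n % q = 1) := by
  have : NeZero q := ⟨by omega⟩
  refine ⟨fun ⟨S0, S1, h⟩ => ?_, fun ⟨T0, T1, h⟩ => ?_⟩
  · obtain ⟨z, hz⟩ := h.isEigenfun.exists_eq_of_hammingGraph
    exact ⟨z, by exact_mod_cast (by linarith : (n : ℝ) = q * z)⟩
  · obtain ⟨z, hz⟩ := h.isEigenfun.exists_eq_of_hammingGraph
    have hn : n = q * z + 1 := by exact_mod_cast (by linarith : (n : ℝ) = q * z + 1)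
    rw [hn, Nat.mul_add_mod, Nat.mod_eq_of_lt (by omega)]

/-- For `q ≥ 3`, `n ≥ 2`: if a (nonempty) spherical bitrade exists in `H(n,q)`
then `q ∣ n`, and if a (nonempty) perfect bitrade exists in `H(n,q)` then `n ≡ 1 (mod q)`. -/
theorem statement7 (q n : ℕ) (hq : 3 ≤ q) (hn : 2 ≤ n) :
    ((∃ S0 S1 : Set (Fin n → Fin q), IsSphericalBitrade (hammingGraph n q) S0 S1) →
      q ∣ n) ∧
    ((∃ T0 T1 : Set (Fin n → Fin q), IsPerfectBitrade (hammingGraph n q) T0 T1) →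
      n % q = 1) :=
  statement7_general q n hq
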